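/- Let r ∈ [n] and let σ be a word consisting of the n−1 elements of [n]\{r} in some order. Then MIS(σ,r) is an A-B permutation: for every k ∈ {1,...,n} there exist integers A ≤ B with B − A = k − 1 such that the set of the first k entries of MIS(σ,r), i.e., {mi(σ,1,r), ..., mi(σ,k,r)}, equals the integer interval {A, A+1, ..., B}. -/

import Mathlib

open Polynomial

/-- The word (1, 2, ..., n) as a list of integers. -/
def W (n : ℕ) : List ℤ := (List.range n).map (fun i => (i : ℤ) + 1)

/-- Descent set of a word: 1-based indices i ∈ {1,...,m-1} with w(i) > w(i+1). -/
def descSet (w : List ℤ) : Finset ℕ :=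
  (Finset.Icc 1 (w.length - 1)).filter (fun i => w.getD (i - 1) 0 > w.getD i 0)

/-- Major index of a word: the sum of its descents. -/
def maj (w : List ℤ) : ℕ := ∑ i ∈ descSet w, i

/-- `dstat w k` is the number of descents of `w` that are ≥ k. -/
def dstat (w : List ℤ) (k : ℕ) : ℕ := ((descSet w).filter (fun i => k ≤ i)).card

/-- Major increment: the change in major index when `r` is inserted into `w`
at (1-based) position `k`. -/
def mi (w : List ℤ) (k : ℕ) (r : ℤ) : ℤ := (maj (w.insertIdx (k - 1) r) : ℤ) - (maj w : ℤ)

/-- The q-factorial [m]_q! = ∏_{i=1}^m (1 + q + ... + q^{i-1}), as a polynomial in q. -/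
noncomputable def qFact (m : ℕ) : Polynomial ℚ :=
  ∏ i ∈ Finset.range m, ∑ j ∈ Finset.range (i + 1), (X : Polynomial ℚ) ^ j

/-- The q-binomial coefficient [n choose a]_q = [n]_q!/([a]_q!·[n−a]_q!). -/
noncomputable def qBinom (n a : ℕ) : Polynomial ℚ := qFact n / (qFact a * qFact (n - a))

/-- The set of all shuffles of two words `θ` and `π` (words containing `θ` and `π`
as complementary subwords). -/
def shuffles (θ π : List ℤ) : Finset (List ℤ) :=
  (θ ++ π).permutations.toFinset.filter (fun σ => θ.Sublist σ ∧ π.Sublist σ)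

/-!
Build `σ` up by appending one letter at a time, carrying the invariant that `MIS(σ, r)` is a
permutation of `{0, …, |σ|}` whose prefixes are intervals. Appending `x` after the last letter
`z` raises every increment at a position `k ≤ |σ|` by `1` if `x < z` and by `0` otherwise (the
descent created at `|σ|` is pushed one step right), so those prefixes remain intervals. The two
new increments are explicit: inserting at the very end gives `|σ| + 1` or `0`, and inserting
between `z` and `x` gives, in every relative order of `r`, `z`, `x`, the integer adjacent to one
end of the shifted interval.
-/

open Finset

-- `W n` elaborates to a `map` of the coerced list `↑(List.range n) : List ℤ`, a `flatMap`.
lemma W_eq_map_range (n : ℕ) : W n = (List.range n).map (fun i : ℕ => (i : ℤ) + 1) := by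
  simp [W, ← List.map_eq_flatMap, Function.comp_def]

lemma nodup_W (n : ℕ) : (W n).Nodup := by
  rw [W_eq_map_range]
  exact List.nodup_range.map fun a b h => by simpa using h

lemma length_W (n : ℕ) : (W n).length = n := by simp [W_eq_map_range]

lemma insertIdx_append_singleton {α : Type*} (r x : α) :
    ∀ (w : List α) {j : ℕ}, j ≤ w.length →
      (w ++ [x]).insertIdx j r = w.insertIdx j r ++ [x]
  | _, 0, _ => rfl
  | [], _ + 1, h => by simp at h
  | _ :: w, _ + 1, h => by
      simp only [List.cons_append, List.insertIdx_succ_cons,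
        insertIdx_append_singleton r x w (Nat.le_of_succ_le_succ h)]

lemma maj_singleton (x : ℤ) : maj [x] = 0 := by simp [maj, descSet]

lemma maj_append_singleton (w : List ℤ) (z x : ℤ) :
    maj (w ++ [z] ++ [x]) = maj (w ++ [z]) + if x < z then (w ++ [z]).length else 0 := by
  have hlen : (w ++ [z]).length = w.length + 1 := List.length_append
  unfold maj descSet
  rw [List.length_append, List.length_singleton, Nat.add_sub_cancel, hlen, Nat.add_sub_cancel,
    sum_filter, sum_filter, sum_Icc_succ_top (by omega : 1 ≤ w.length + 1)]
  congr 1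
  · refine sum_congr rfl fun i hi => ?_
    rw [mem_Icc] at hi
    rw [List.getD_append _ _ _ (i - 1) (by omega), List.getD_append _ _ _ i (by omega)]
  · simp

lemma mi_append_singleton_of_le (w : List ℤ) (z x r : ℤ) {k : ℕ}
    (hk : k ≤ (w ++ [z]).length) :
    mi (w ++ [z] ++ [x]) k r = mi (w ++ [z]) k r + if x < z then 1 else 0 := by
  have hk' : k - 1 ≤ w.length := by rw [List.length_append, List.length_singleton] at hk; omega
  unfold mi
  rw [insertIdx_append_singleton r x _ (by omega), insertIdx_append_singleton r z w hk',
    maj_append_singleton, maj_append_singleton, List.length_append, List.length_append,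
    List.length_insertIdx_of_le_length hk']
  split_ifs <;> push_cast <;> ring

lemma mi_length_add_one (w : List ℤ) (z r : ℤ) :
    mi (w ++ [z]) ((w ++ [z]).length + 1) r = if r < z then ((w ++ [z]).length : ℤ) else 0 := by
  rw [mi, Nat.add_sub_cancel, List.insertIdx_length_self, maj_append_singleton]
  split_ifs <;> simp

lemma mi_append_singleton_length_add_one (w : List ℤ) (z x r : ℤ) :
    mi (w ++ [z] ++ [x]) ((w ++ [z]).length + 1) r =
      (if r < z then ((w ++ [z]).length : ℤ) else 0) +
        (if x < r then ((w ++ [z]).length : ℤ) + 1 else 0) -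
          (if x < z then ((w ++ [z]).length : ℤ) else 0) := by
  rw [mi, Nat.add_sub_cancel, insertIdx_append_singleton r x _ le_rfl, List.insertIdx_length_self,
    maj_append_singleton (w ++ [z]) r x, maj_append_singleton w z r, maj_append_singleton w z x]
  split_ifs <;> simp <;> ring

lemma image_Icc_one_add_one (f : ℕ → ℤ) (k : ℕ) :
    (Icc 1 (k + 1)).image f = insert (f (k + 1)) ((Icc 1 k).image f) := by
  rw [← insert_Icc_right_eq_Icc_add_one (by omega), image_insert]

/-- `(f 1, …, f (m + 1))` is a permutation of `{0, …, m}` whose initial segments are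
intervals. -/
def IsABPermutation (f : ℕ → ℤ) (m : ℕ) : Prop :=
  (∀ k ≤ m + 1, ∃ A : ℤ, (Icc 1 k).image f = Icc A (A + k - 1)) ∧
    (Icc 1 (m + 1)).image f = Icc 0 (m : ℤ)

lemma IsABPermutation.of_prefix {f : ℕ → ℤ} {m : ℕ}
    (hpre : ∀ k ≤ m, ∃ A : ℤ, (Icc 1 k).image f = Icc A (A + k - 1))
    (hfull : (Icc 1 (m + 1)).image f = Icc 0 (m : ℤ)) : IsABPermutation f m := by
  refine ⟨fun k hk => ?_, hfull⟩
  rcases Nat.lt_or_ge k (m + 1) with hk' | hk'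
  · exact hpre k (by omega)
  · obtain rfl : k = m + 1 := by omega
    exact ⟨0, by rw [hfull]; push_cast; ring_nf⟩

lemma isABPermutation_mi_nil (r : ℤ) : IsABPermutation (mi [] · r) 0 := by
  have h : mi [] 1 r = 0 := by simp [mi, maj, descSet]
  refine .of_prefix (fun k hk => ⟨0, ?_⟩) (by simp [h])
  obtain rfl : k = 0 := by omega
  simp

lemma isABPermutation_mi_singleton {x r : ℤ} (hx : x ≠ r) :
    IsABPermutation (mi [x] · r) 1 := by
  have h1 : mi [x] 1 r = if x < r then 1 else 0 := by
    rw [mi, Nat.sub_self, List.insertIdx_zero, maj_singleton,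
      show [r, x] = [] ++ [r] ++ [x] from rfl, maj_append_singleton, List.nil_append, maj_singleton]
    split_ifs <;> simp
  have h2 : mi [x] 2 r = if r < x then 1 else 0 := by
    simpa using mi_length_add_one [] x r
  refine .of_prefix (fun k hk => ?_) ?_
  · interval_cases k
    · exact ⟨0, by simp⟩
    · exact ⟨mi [x] 1 r, by simp⟩
  · rw [image_Icc_one_add_one, Icc_self, image_singleton, h1, h2]
    ext t
    simp only [mem_insert, mem_singleton, mem_Icc]
    split_ifs <;> omega

-- The last increment of `w ++ [z]` is `0` or `m`; the first `m` fill the rest of `{0, …, m}`.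
lemma IsABPermutation.image_mi_Icc_length {w : List ℤ} {z r : ℤ} (hz : z ≠ r)
    (h : IsABPermutation (mi (w ++ [z]) · r) (w ++ [z]).length) :
    (Icc 1 (w ++ [z]).length).image (mi (w ++ [z]) · r) =
      Icc (if z < r then 1 else 0) ((if z < r then 1 else 0) + ((w ++ [z]).length : ℤ) - 1) := by
  set m := (w ++ [z]).length
  have hm : 1 ≤ m := by simp [m]
  obtain ⟨A, hA⟩ := h.1 m (by omega)
  have hfull := h.2
  rw [image_Icc_one_add_one, hA, mi_length_add_one] at hfull
  have e := Finset.ext_iff.mp hfull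
  have e1 := e 0; have e2 := e m; have e3 := e A; have e4 := e (A + m - 1)
  simp only [mem_insert, mem_Icc] at e1 e2 e3 e4
  rw [hA]
  split_ifs at e1 e2 e3 e4 ⊢ <;> congr 1 <;> omega

lemma IsABPermutation.mi_append_singleton {w : List ℤ} {z x r : ℤ} (hz : z ≠ r) (hx : x ≠ r)
    (h : IsABPermutation (mi (w ++ [z]) · r) (w ++ [z]).length) :
    IsABPermutation (mi (w ++ [z] ++ [x]) · r) (w ++ [z] ++ [x]).length := by
  have hlen : (w ++ [z] ++ [x]).length = (w ++ [z]).length + 1 := List.length_append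
  have hv := mi_append_singleton_length_add_one w z x r
  have hu := mi_length_add_one (w ++ [z]) x r
  rw [hlen, Nat.cast_succ] at hu
  have hfirst := h.image_mi_Icc_length hz
  set m := (w ++ [z]).length
  set a : ℤ := if z < r then 1 else 0
  set c : ℤ := if x < z then 1 else 0
  have hshift : ∀ k ≤ m, (Icc 1 k).image (mi (w ++ [z] ++ [x]) · r) =
      ((Icc 1 k).image (mi (w ++ [z]) · r)).image (· + c) := fun k hk => by
    rw [image_image]
    exact image_congr fun j hj =>
      mi_append_singleton_of_le w z x r ((mem_Icc.mp (mem_coe.mp hj)).2.trans hk)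
  obtain ⟨A, hA, hA'⟩ : ∃ A : ℤ,
      insert (mi (w ++ [z] ++ [x]) (m + 1) r) (Icc (a + c) (a + c + m - 1)) = Icc A (A + m) ∧
      insert (mi (w ++ [z] ++ [x]) (m + 1 + 1) r) (Icc A (A + m)) = Icc 0 ((m : ℤ) + 1) := by
    refine ⟨min (a + c) (mi (w ++ [z] ++ [x]) (m + 1) r), ?_, ?_⟩ <;>
    · ext t
      simp only [mem_insert, mem_Icc, min_def, hv, hu, a, c]
      split_ifs <;> omega
  have hpre : (Icc 1 (m + 1)).image (mi (w ++ [z] ++ [x]) · r) = Icc A (A + m) := by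
    rw [image_Icc_one_add_one, hshift m le_rfl, hfirst, image_add_right_Icc, ← hA]
    congr 2; ring
  rw [hlen]
  refine .of_prefix (fun k hk => ?_) ?_
  · rcases Nat.lt_or_ge k (m + 1) with hk' | hk'
    · obtain ⟨B, hB⟩ := h.1 k (by omega)
      refine ⟨B + c, ?_⟩
      rw [hshift k (by omega), hB, image_add_right_Icc]
      congr 1; ring
    · obtain rfl : k = m + 1 := by omega
      exact ⟨A, by rw [hpre]; push_cast; ring_nf⟩
  · rw [image_Icc_one_add_one, hpre, hA']
    push_cast; ring_nf

theorem isABPermutation_mi {r : ℤ} {σ : List ℤ} (hr : r ∉ σ) :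
    IsABPermutation (mi σ · r) σ.length := by
  induction σ using List.reverseRecOn with
  | nil => exact isABPermutation_mi_nil r
  | append_singleton σ x ih =>
    have hx : x ≠ r := fun h => hr (by simp [h])
    rcases σ.eq_nil_or_concat with rfl | ⟨w, z, rfl⟩
    · exact isABPermutation_mi_singleton hx
    · rw [List.concat_eq_append] at ih hr ⊢
      have hr' : r ∉ w ++ [z] := fun h => hr (List.mem_append_left _ h)
      exact .mi_append_singleton (fun h => hr' (by simp [h])) hx (ih hr')

/-- MIS(σ,r) is an A-B permutation: for every k ∈ {1,...,n} there are integers A ≤ B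
with B - A = k - 1 such that the set of the first k entries of MIS(σ,r) is the
integer interval {A, A+1, ..., B}. -/
theorem mis_AB_permutation (n : ℕ) (r : ℤ) (hr : r ∈ W n) (σ : List ℤ)
    (hσ : σ.Perm ((W n).erase r)) (k : ℕ) (hk1 : 1 ≤ k) (hkn : k ≤ n) :
    ∃ A B : ℤ, A ≤ B ∧ B - A = (k : ℤ) - 1 ∧
      (Finset.Icc 1 k).image (fun j => mi σ j r) = Finset.Icc A B := by
  have hrσ : r ∉ σ := fun h => (nodup_W n).not_mem_erase (hσ.mem_iff.mp h)
  have hlen : σ.length + 1 = n := by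
    rw [hσ.length_eq, List.length_erase_of_mem hr, length_W]
    omega
  obtain ⟨A, hA⟩ := (isABPermutation_mi hrσ).1 k (by omega)
  exact ⟨A, A + k - 1, by omega, by ring, hA⟩
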